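/- Define ζ(ε) = (1/2)[ erf( -(1-ε)/√2 · √(log((1+ε)/(1-ε))/(2ε)) ) + erf( (1+ε)/√2 · √(log((1+ε)/(1-ε))/(2ε)) ) ] for ε ∈ (0,1). Then ζ is convex on (0,1), ζ(ε) → 0 as ε → 0⁺, and ζ(ε) → 1/2 as ε → 1⁻. -/

import Mathlib

open Real Filter Topology

noncomputable def erf (x : ℝ) : ℝ := (2 / Real.sqrt π) * ∫ t in (0 : ℝ)..x, Real.exp (-t ^ 2)

noncomputable def zeta (ε : ℝ) : ℝ :=
  (1 / 2) *
    (erf (-(1 - ε) / Real.sqrt 2 * Real.sqrt (Real.log ((1 + ε) / (1 - ε)) / (2 * ε))) +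
     erf ((1 + ε) / Real.sqrt 2 * Real.sqrt (Real.log ((1 + ε) / (1 - ε)) / (2 * ε))))

/-!
Write `S ε = log ((1 + ε) / (1 - ε)) / (2 ε)` (that is, `artanh ε / ε`), so that
`ζ = (erf b - erf a) / 2` with `a = (1 - ε) √(S / 2)` and `b = (1 + ε) √(S / 2)`.
Since `b² - a² = log ((1 + ε) / (1 - ε))`, the two terms of `ζ'` containing the
derivative of `S` cancel, leaving `ζ' = √(2 / π) exp H` with
`H = ½ log S - log (1 - ε) - (1 + ε)² S / 2`. A direct computation gives
`H' = (1 - (1 - ε²) S)² / (2 ε (1 - ε²) S) ≥ 0`, so `ζ'` increases and `ζ` is convex.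
As `ε → 0⁺`, `S → 1` and the two erf terms cancel by oddness. As `ε → 1⁻`, we have
`(1 - ε)² S ≤ (1 - ε²) / (2 ε) → 0` while `S → ∞`, so `a → 0`, `b → ∞` and
`ζ → (0 + 1) / 2`.
-/

theorem hasDerivAt_erf (x : ℝ) : HasDerivAt erf (2 / √π * exp (-x ^ 2)) x := by
  have hc : Continuous fun t : ℝ => exp (-t ^ 2) := by fun_prop
  exact (intervalIntegral.integral_hasDerivAt_right (hc.intervalIntegrable _ _)
    hc.aestronglyMeasurable.stronglyMeasurableAtFilter hc.continuousAt).const_mul _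

theorem continuous_erf : Continuous erf :=
  continuous_iff_continuousAt.2 fun x => (hasDerivAt_erf x).continuousAt

theorem erf_neg (x : ℝ) : erf (-x) = -erf x := by
  have h := intervalIntegral.integral_comp_neg (a := 0) (b := x) fun t : ℝ => exp (-t ^ 2)
  simp only [neg_sq, neg_zero] at h
  rw [erf, erf, intervalIntegral.integral_symm, ← h]
  ring

theorem tendsto_erf_atTop : Tendsto erf atTop (𝓝 1) := by
  have hi : MeasureTheory.IntegrableOn (fun t : ℝ => exp (-t ^ 2)) (Set.Ioi 0) := by
    simpa using (integrableOn_Ioi_exp_neg_mul_sq_iff (b := 1)).2 one_pos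
  have h := (MeasureTheory.intervalIntegral_tendsto_integral_Ioi 0 hi tendsto_id).const_mul
    (2 / √π)
  have hval : 2 / √π * ∫ t in Set.Ioi (0 : ℝ), exp (-t ^ 2) = 1 := by
    have hπ : √π ≠ 0 := by positivity
    simpa [hπ] using congrArg (2 / √π * ·) (integral_gaussian_Ioi 1)
  rwa [hval] at h

theorem hasDerivAt_log_one_add_div_one_sub {x : ℝ} (hm : -1 < x) (h1 : x < 1) :
    HasDerivAt (fun y => log ((1 + y) / (1 - y))) (2 / (1 - x ^ 2)) x := by
  have hpos : 0 < 1 - x := by linarith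
  have hpos' : 0 < 1 + x := by linarith
  have hq : HasDerivAt (fun y => (1 + y) / (1 - y))
      ((1 * (1 - x) - (1 + x) * -1) / (1 - x) ^ 2) x :=
    ((hasDerivAt_id' x).const_add 1).div ((hasDerivAt_id' x).const_sub 1) hpos.ne'
  refine (hq.log (by positivity)).congr_deriv ?_
  have : 1 - x ^ 2 ≠ 0 := by nlinarith
  field_simp
  ring

noncomputable def zetaS (ε : ℝ) : ℝ := log ((1 + ε) / (1 - ε)) / (2 * ε)

theorem log_one_add_div_one_sub_eq {ε : ℝ} (h0 : ε ≠ 0) :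
    log ((1 + ε) / (1 - ε)) = 2 * ε * zetaS ε := by
  unfold zetaS
  field_simp

theorem zetaS_pos {ε : ℝ} (h0 : 0 < ε) (h1 : ε < 1) : 0 < zetaS ε := by
  have : 1 < (1 + ε) / (1 - ε) := by rw [lt_div_iff₀ (by linarith)]; linarith
  exact div_pos (log_pos this) (by linarith)

theorem hasDerivAt_zetaS {ε : ℝ} (h0 : 0 < ε) (h1 : ε < 1) :
    HasDerivAt zetaS ((1 / (1 - ε ^ 2) - zetaS ε) / ε) ε := by
  refine ((hasDerivAt_log_one_add_div_one_sub (by linarith) h1).div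
    ((hasDerivAt_id' ε).const_mul 2) (by positivity)).congr_deriv ?_
  have : 1 - ε ^ 2 ≠ 0 := by nlinarith
  rw [log_one_add_div_one_sub_eq h0.ne']
  field_simp

noncomputable def zetaH (ε : ℝ) : ℝ :=
  1 / 2 * log (zetaS ε) - log (1 - ε) - (1 + ε) ^ 2 * zetaS ε / 2

theorem hasDerivAt_zetaH {ε : ℝ} (h0 : 0 < ε) (h1 : ε < 1) :
    HasDerivAt zetaH
      ((1 - (1 - ε ^ 2) * zetaS ε) ^ 2 / (2 * ε * ((1 - ε ^ 2) * zetaS ε))) ε := by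
  have hS := hasDerivAt_zetaS h0 h1
  have hSpos := zetaS_pos h0 h1
  have h := ((hS.log hSpos.ne').const_mul (1 / 2)).sub
    (((hasDerivAt_id' ε).const_sub 1).log (by linarith)) |>.sub
    ((((hasDerivAt_id' ε).const_add 1).fun_pow 2).fun_mul hS |>.div_const 2)
  refine h.congr_deriv ?_
  have : 1 - ε ^ 2 ≠ 0 := by nlinarith
  have : 1 - ε ≠ 0 := by linarith
  field_simp
  ring

theorem monotoneOn_zetaH : MonotoneOn zetaH (Set.Ioo 0 1) := by
  refine monotoneOn_of_hasDerivWithinAt_nonneg (convex_Ioo 0 1)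
    (fun x hx => (hasDerivAt_zetaH hx.1 hx.2).continuousAt.continuousWithinAt)
    (fun x hx => (hasDerivAt_zetaH (interior_subset hx).1 (interior_subset hx).2).hasDerivWithinAt)
    fun x hx => ?_
  rw [interior_Ioo] at hx
  have : 0 < 1 - x ^ 2 := by nlinarith [hx.1, hx.2]
  have := zetaS_pos hx.1 hx.2
  have := hx.1
  positivity

theorem exp_zetaH {ε : ℝ} (hS : 0 < zetaS ε) (h1 : ε < 1) :
    exp (zetaH ε) = √(zetaS ε) * exp (-((1 + ε) ^ 2 * zetaS ε / 2)) / (1 - ε) := by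
  have hlog : 1 / 2 * log (zetaS ε) = log √(zetaS ε) := by rw [log_sqrt hS.le]; ring
  rw [zetaH, hlog, exp_sub, exp_sub, exp_log (sqrt_pos.2 hS), exp_log (by linarith), exp_neg]
  field_simp

theorem hasDerivAt_zeta {ε : ℝ} (h0 : 0 < ε) (h1 : ε < 1) :
    HasDerivAt zeta (√(2 / π) * exp (zetaH ε)) ε := by
  have hSpos := zetaS_pos h0 h1
  set u := √(zetaS ε)
  -- the value of `u'` is irrelevant: it cancels in the final identity
  obtain ⟨u', hu⟩ : ∃ u', HasDerivAt (fun x => √(zetaS x)) u' ε :=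
    ⟨_, (hasDerivAt_zetaS h0 h1).sqrt hSpos.ne'⟩
  have ha : HasDerivAt (fun x => -(1 - x) / √2 * √(zetaS x))
      (1 / √2 * u + -(1 - ε) / √2 * u') ε :=
    ((((hasDerivAt_id' ε).const_sub 1).neg.div_const √2).mul hu).congr_deriv
      (by simp only [Pi.neg_apply]; ring)
  have hb : HasDerivAt (fun x => (1 + x) / √2 * √(zetaS x))
      (1 / √2 * u + (1 + ε) / √2 * u') ε :=
    (((hasDerivAt_id' ε).const_add 1).div_const √2).mul hu
  have hzeta : HasDerivAt zeta (1 / 2 * (2 / √π * exp (-(-(1 - ε) / √2 * u) ^ 2) *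
      (1 / √2 * u + -(1 - ε) / √2 * u') + 2 / √π * exp (-((1 + ε) / √2 * u) ^ 2) *
      (1 / √2 * u + (1 + ε) / √2 * u'))) ε :=
    (((hasDerivAt_erf _).comp ε ha).add ((hasDerivAt_erf _).comp ε hb)).const_mul _
  have h2 : √2 ^ 2 = 2 := sq_sqrt zero_le_two
  have hb2 : ((1 + ε) / √2 * u) ^ 2 = (1 + ε) ^ 2 * zetaS ε / 2 := by
    rw [mul_pow, div_pow, h2, sq_sqrt hSpos.le]; ring
  -- `b² - a² = 2 ε S = log ((1 + ε) / (1 - ε))`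
  have hexp_a : exp (-(-(1 - ε) / √2 * u) ^ 2) =
      exp (-((1 + ε) ^ 2 * zetaS ε / 2)) * ((1 + ε) / (1 - ε)) := by
    rw [← exp_log (show 0 < (1 + ε) / (1 - ε) from div_pos (by linarith) (by linarith)),
      ← exp_add, log_one_add_div_one_sub_eq h0.ne', mul_pow, div_pow, h2, sq_sqrt hSpos.le]
    ring_nf
  refine hzeta.congr_deriv ?_
  rw [hexp_a, hb2, exp_zetaH hSpos h1, sqrt_div' _ pi_pos.le]
  have : 1 - ε ≠ 0 := by linarith
  have : √π ≠ 0 := by positivity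
  have : √2 ≠ 0 := by positivity
  field_simp
  linear_combination (-u) * h2

theorem convexOn_zeta : ConvexOn ℝ (Set.Ioo 0 1) zeta := by
  refine MonotoneOn.convexOn_of_deriv (convex_Ioo 0 1)
    (fun x hx => (hasDerivAt_zeta hx.1 hx.2).continuousAt.continuousWithinAt)
    (fun x hx => (hasDerivAt_zeta (interior_subset hx).1 (interior_subset hx).2)
      |>.differentiableAt.differentiableWithinAt) ?_
  rw [interior_Ioo]
  intro x hx y hy hxy
  rw [(hasDerivAt_zeta hx.1 hx.2).deriv, (hasDerivAt_zeta hy.1 hy.2).deriv]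
  gcongr
  exact monotoneOn_zetaH hx hy hxy

theorem tendsto_zetaS_nhdsGT_zero : Tendsto zetaS (𝓝[>] 0) (𝓝 1) := by
  have h := (hasDerivAt_iff_tendsto_slope.1 (hasDerivAt_log_one_add_div_one_sub
    (x := 0) (by norm_num) (by norm_num))).mono_left (nhdsGT_le_nhdsNE 0) |>.div_const 2
  norm_num at h
  refine h.congr fun x => ?_
  simp [slope_def_field, zetaS, div_div, mul_comm]

theorem tendsto_one_sub_nhdsLT_one : Tendsto (fun ε : ℝ => 1 - ε) (𝓝[<] 1) (𝓝[>] 0) := by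
  have h : Tendsto (fun ε : ℝ => 1 - ε) (𝓝[<] 1) (𝓝[>] (1 - 1)) := map_subLeft_nhdsLT.le
  rwa [sub_self] at h

theorem tendsto_one_sub_sq_mul_zetaS :
    Tendsto (fun ε => (1 - ε) ^ 2 * zetaS ε) (𝓝[<] 1) (𝓝 0) := by
  have hbound : Tendsto (fun ε : ℝ => (1 - ε ^ 2) / (2 * ε)) (𝓝[<] 1) (𝓝 0) := by
    have : ContinuousAt (fun ε : ℝ => (1 - ε ^ 2) / (2 * ε)) 1 :=
      ContinuousAt.div (by fun_prop) (by fun_prop) (by norm_num)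
    simpa using this.tendsto.mono_left nhdsWithin_le_nhds
  refine tendsto_of_tendsto_of_tendsto_of_le_of_le' tendsto_const_nhds hbound ?_ ?_ <;>
    filter_upwards [Ioo_mem_nhdsLT (show (0 : ℝ) < 1 by norm_num)] with ε ⟨h0, h1⟩
  · exact mul_nonneg (sq_nonneg _) (zetaS_pos h0 h1).le
  · have hq : 0 < (1 + ε) / (1 - ε) := div_pos (by linarith) (by linarith)
    calc (1 - ε) ^ 2 * zetaS ε ≤ (1 - ε) ^ 2 * ((1 + ε) / (1 - ε) / (2 * ε)) := by
          unfold zetaS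
          gcongr
          exact log_le_self hq.le
      _ = (1 - ε ^ 2) / (2 * ε) := by
          have : 1 - ε ≠ 0 := by linarith
          field_simp
          ring

theorem tendsto_zetaS_nhdsLT_one : Tendsto zetaS (𝓝[<] 1) atTop := by
  have hmem := Ioo_mem_nhdsLT (show (0 : ℝ) < 1 by norm_num)
  have hq : Tendsto (fun ε : ℝ => (1 + ε) / (1 - ε)) (𝓝[<] 1) atTop := by
    refine tendsto_atTop_mono' _ ?_ (tendsto_inv_nhdsGT_zero.comp tendsto_one_sub_nhdsLT_one)
    filter_upwards [hmem] with ε ⟨h0, h1⟩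
    rw [Function.comp_apply, inv_eq_one_div]
    gcongr
    linarith
  refine tendsto_atTop_mono' _ ?_ ((tendsto_log_atTop.comp hq).atTop_div_const two_pos)
  filter_upwards [hmem] with ε ⟨h0, h1⟩
  have : 1 < (1 + ε) / (1 - ε) := by rw [lt_div_iff₀ (by linarith)]; linarith
  exact div_le_div_of_nonneg_left (log_pos this).le (by linarith) (by linarith)

theorem tendsto_zeta_nhdsGT_zero : Tendsto zeta (𝓝[>] 0) (𝓝 0) := by
  have hε : Tendsto (fun ε : ℝ => ε) (𝓝[>] 0) (𝓝 0) := nhdsWithin_le_nhds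
  have hu : Tendsto (fun ε => √(zetaS ε)) (𝓝[>] 0) (𝓝 1) := by
    simpa using tendsto_zetaS_nhdsGT_zero.sqrt
  have ha := (continuous_erf.tendsto _).comp
    ((((tendsto_const_nhds (x := (1 : ℝ))).sub hε).neg.div_const √2).mul hu)
  have hb := (continuous_erf.tendsto _).comp
    ((((tendsto_const_nhds (x := (1 : ℝ))).add hε).div_const √2).mul hu)
  have h := (ha.add hb).const_mul (1 / 2 : ℝ)
  rwa [neg_div, neg_mul, erf_neg, sub_zero, add_zero, neg_add_cancel, mul_zero] at h

theorem tendsto_zeta_nhdsLT_one : Tendsto zeta (𝓝[<] 1) (𝓝 (1 / 2)) := by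
  have hmem := Ioo_mem_nhdsLT (show (0 : ℝ) < 1 by norm_num)
  have ha : Tendsto (fun ε => -(1 - ε) / √2 * √(zetaS ε)) (𝓝[<] 1) (𝓝 0) := by
    have h := (tendsto_one_sub_sq_mul_zetaS.sqrt.neg).div_const √2
    rw [sqrt_zero, neg_zero, zero_div] at h
    refine h.congr' ?_
    filter_upwards [hmem] with ε ⟨h0, h1⟩
    rw [sqrt_mul (sq_nonneg _), sqrt_sq (by linarith)]
    ring
  have hb : Tendsto (fun ε => (1 + ε) / √2 * √(zetaS ε)) (𝓝[<] 1) atTop := by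
    refine tendsto_atTop_mono' _ ?_
      ((tendsto_sqrt_atTop.comp tendsto_zetaS_nhdsLT_one).const_mul_atTop
        (show (0 : ℝ) < 1 / √2 by positivity))
    filter_upwards [hmem] with ε ⟨h0, h1⟩
    rw [Function.comp_apply]
    gcongr
    linarith
  have h := (((continuous_erf.tendsto 0).comp ha).add (tendsto_erf_atTop.comp hb)).const_mul
    (1 / 2 : ℝ)
  rw [erf, intervalIntegral.integral_same, mul_zero, zero_add, mul_one] at h
  exact h

theorem zeta_convex_and_limits :
    ConvexOn ℝ (Set.Ioo (0 : ℝ) 1) zeta ∧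
    Tendsto zeta (𝓝[>] (0 : ℝ)) (𝓝 0) ∧
    Tendsto zeta (𝓝[<] (1 : ℝ)) (𝓝 (1 / 2)) :=
  ⟨convexOn_zeta, tendsto_zeta_nhdsGT_zero, tendsto_zeta_nhdsLT_one⟩
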